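/- arXiv:0708.3301 — 2 statements merged into one kernel-verified Lean document; each statement's English description precedes it below -/
import Mathlib

section
/- For natural numbers n ≥ 1 and k ≥ 0, the imaginary part of ∫₀^π ((exp(e^{iθ}) − 1)^k / k!) · sin(nθ) dθ equals ({n choose k}/n!)·(π/2), where {n choose k} is the Stirling number of the second kind. -/
/-!
The exponential generating function of the Stirling numbers of the second kind is
`(exp z - 1) ^ k / k! = ∑ₘ S(m, k) zᵐ / m!`: expanding `(exp z - 1) ^ k` binomially, the
coefficient of `zᵐ / m!` is the `k`-th forward difference of `x ↦ xᵐ` at `0`, which is `k! S(m, k)`.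
On the unit circle `z = exp (θ i)` the imaginary part of `zᵐ sin (n θ)` is `sin (m θ) sin (n θ)`,
so by orthogonality of the sines on `[0, π]` the integral picks out the single coefficient `m = n`.
-/

/-- Stirling numbers of the second kind. -/
def stirling : ℕ → ℕ → ℕ
  | 0, 0 => 1
  | 0, _ + 1 => 0
  | _ + 1, 0 => 0
  | n + 1, k + 1 => (k + 1) * stirling n (k + 1) + stirling n k

/-- Bell numbers, via the standard recurrence. -/
def bell : ℕ → ℕ
  | 0 => 1
  | n + 1 => ∑ k ∈ (Finset.range (n + 1)).attach, Nat.choose n k.1 * bell k.1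
decreasing_by exact Finset.mem_range.mp k.2

open Real Complex

open Finset
open scoped Nat fwdDiff

theorem fwdDiff_iter_succ_nsmul_apply_zero {G : Type*} [AddCommGroup G] (f : ℕ → G) (k : ℕ) :
    Δ_[1] ^[k + 1] (fun x ↦ x • f x) 0 = (k + 1) • Δ_[1] ^[k] f 1 := by
  rw [fwdDiff_iter_eq_sum_shift, fwdDiff_iter_eq_sum_shift, sum_range_succ', smul_sum]
  simp only [zero_smul, smul_zero, add_zero, zero_add, smul_eq_mul, mul_one]
  refine sum_congr rfl fun i _ ↦ ?_
  rw [Nat.add_sub_add_right, add_comm 1 i, ← Nat.cast_smul_eq_nsmul ℤ,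
    ← Nat.cast_smul_eq_nsmul ℤ, smul_smul, smul_smul]
  congr 1
  have := congrArg (Nat.cast : ℕ → ℤ) (Nat.add_one_mul_choose_eq k i)
  push_cast at this ⊢
  linear_combination -(-1 : ℤ) ^ (k - i) * this

theorem factorial_mul_stirling_eq_fwdDiff_iter {R : Type*} [CommRing R] (n k : ℕ) :
    (k ! * stirling n k : R) = Δ_[1] ^[k] (fun x : ℕ ↦ (x : R) ^ n) 0 := by
  induction n generalizing k with
  | zero =>
    cases k with
    | zero => simp [stirling]
    | succ k => simp [stirling, Function.iterate_succ_apply, Function.iterate_fixed]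
  | succ n ih =>
    cases k with
    | zero => simp [stirling]
    | succ k =>
      calc ((k + 1)! * stirling (n + 1) (k + 1) : R)
          = (k + 1) • ((k ! * stirling n k : R) + ((k + 1)! * stirling n (k + 1))) := by
            simp only [stirling, Nat.factorial_succ, nsmul_eq_mul]; push_cast; ring
        _ = (k + 1) • Δ_[1] ^[k] (fun x : ℕ ↦ (x : R) ^ n) 1 := by
            rw [ih, ih, Function.iterate_succ_apply', fwdDiff, zero_add, add_sub_cancel]
        _ = Δ_[1] ^[k + 1] (fun x : ℕ ↦ (x : R) ^ (n + 1)) 0 := by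
            rw [← fwdDiff_iter_succ_nsmul_apply_zero]
            simp only [nsmul_eq_mul, pow_succ']

theorem hasSum_stirling_div_factorial_mul_pow (k : ℕ) (z : ℂ) :
    HasSum (fun m ↦ (stirling m k / m ! : ℂ) * z ^ m) ((exp z - 1) ^ k / k !) := by
  have hexp (j : ℕ) : HasSum (fun m ↦ (j * z) ^ m / m !) (exp (j * z)) := by
    rw [exp_eq_exp_ℂ]
    exact NormedSpace.expSeries_div_hasSum_exp _
  have hbinom : (exp z - 1) ^ k / k ! =
      ∑ j ∈ range (k + 1), ((-1) ^ (k - j) * k.choose j / k !) * exp (j * z) := by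
    rw [sub_eq_add_neg, add_pow, sum_div]
    refine sum_congr rfl fun j _ ↦ ?_
    rw [Complex.exp_nat_mul]
    ring
  rw [hbinom]
  refine (hasSum_sum fun j _ ↦ (hexp j).mul_left ((-1) ^ (k - j) * k.choose j / k ! : ℂ)).congr_fun
    fun m ↦ ?_
  have hk : (k ! : ℂ) ≠ 0 := mod_cast k.factorial_ne_zero
  have hstirling := factorial_mul_stirling_eq_fwdDiff_iter (R := ℂ) m k
  rw [fwdDiff_iter_eq_sum_shift] at hstirling
  rw [← mul_div_cancel_left₀ (stirling m k : ℂ) hk, hstirling, sum_div, sum_div, sum_mul]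
  refine sum_congr rfl fun j _ ↦ ?_
  simp only [zsmul_eq_mul, smul_eq_mul, zero_add, mul_one]
  push_cast
  ring

theorem integral_cos_int_mul (j : ℤ) :
    ∫ θ in (0 : ℝ)..π, Real.cos (j * θ) = if j = 0 then π else 0 := by
  split_ifs with hj
  · simp [hj]
  · have hj' : (j : ℝ) ≠ 0 := mod_cast hj
    rw [intervalIntegral.integral_comp_mul_left (fun θ ↦ Real.cos θ) hj', integral_cos,
      Real.sin_int_mul_pi]
    simp

theorem integral_sin_nat_mul_mul_sin_nat_mul (m : ℕ) {n : ℕ} (hn : n ≠ 0) :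
    ∫ θ in (0 : ℝ)..π, Real.sin (m * θ) * Real.sin (n * θ) = if m = n then π / 2 else 0 := by
  have hprod (θ : ℝ) : Real.sin (m * θ) * Real.sin (n * θ) =
      (Real.cos (((m - n : ℤ) : ℝ) * θ) - Real.cos (((m + n : ℤ) : ℝ) * θ)) / 2 := by
    push_cast
    rw [sub_mul, add_mul, ← two_mul_sin_mul_sin]
    ring
  have hcont (j : ℤ) : IntervalIntegrable (fun θ ↦ Real.cos (j * θ)) MeasureTheory.volume 0 π :=
    (by fun_prop : Continuous fun θ ↦ Real.cos (j * θ)).intervalIntegrable _ _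
  simp_rw [hprod]
  rw [intervalIntegral.integral_div, intervalIntegral.integral_sub (hcont _) (hcont _),
    integral_cos_int_mul, integral_cos_int_mul, if_neg (show (m + n : ℤ) ≠ 0 by omega)]
  simp only [sub_eq_zero, Nat.cast_inj]
  split_ifs <;> simp

theorem im_integral_mul_sin_of_hasSum {a : ℕ → ℝ} (ha : Summable fun m ↦ ‖a m‖) {g : ℝ → ℂ}
    (hg : ∀ θ : ℝ, HasSum (fun m ↦ (a m : ℂ) * exp (θ * I) ^ m) (g θ)) {n : ℕ} (hn : n ≠ 0) :
    (∫ θ in (0 : ℝ)..π, g θ * Real.sin (n * θ)).im = a n * (π / 2) := by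
  set F : ℕ → ℝ → ℂ := fun m θ ↦ (a m : ℂ) * exp (θ * I) ^ m * Real.sin (n * θ)
  have hF_cont (m : ℕ) : Continuous (F m) := by fun_prop
  have hF_norm (m : ℕ) (θ : ℝ) : ‖F m θ‖ ≤ ‖a m‖ := by
    simp only [F, norm_mul, norm_pow, norm_exp_ofReal_mul_I, one_pow, mul_one, norm_real,
      Complex.norm_real]
    exact mul_le_of_le_one_right (norm_nonneg _) (Real.abs_sin_le_one _)
  have hF_im (m : ℕ) (θ : ℝ) : (F m θ).im = a m * (Real.sin (m * θ) * Real.sin (n * θ)) := by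
    simp only [F, ← Complex.exp_nat_mul]
    rw [show (m : ℂ) * (θ * I) = (m * θ : ℝ) * I by push_cast; ring, mul_right_comm,
      ← ofReal_mul, im_ofReal_mul, exp_ofReal_mul_I_im]
    ring
  have hsum : HasSum (fun m ↦ ∫ θ in (0 : ℝ)..π, F m θ)
      (∫ θ in (0 : ℝ)..π, g θ * Real.sin (n * θ)) :=
    intervalIntegral.hasSum_integral_of_dominated_convergence (fun m _ ↦ ‖a m‖)
      (fun m ↦ (hF_cont m).aestronglyMeasurable)
      (fun m ↦ .of_forall fun θ _ ↦ hF_norm m θ) (.of_forall fun _ _ ↦ ha) intervalIntegrable_const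
      (.of_forall fun θ _ ↦ (hg θ).mul_right _)
  have him (m : ℕ) : (∫ θ in (0 : ℝ)..π, F m θ).im = if m = n then a n * (π / 2) else 0 := by
    rw [← Complex.imCLM_apply, ← ContinuousLinearMap.intervalIntegral_comp_comm _
      ((hF_cont m).intervalIntegrable _ _)]
    simp only [Complex.imCLM_apply, hF_im, intervalIntegral.integral_const_mul,
      integral_sin_nat_mul_mul_sin_nat_mul m hn]
    split_ifs with h <;> simp [h]
  exact (Complex.imCLM.hasSum hsum).unique (by simpa [him] using hasSum_ite_eq n (a n * (π / 2)))

theorem im_integral_exp_sub_one_pow (n k : ℕ) (hn : 1 ≤ n) :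
    (∫ θ in (0:ℝ)..π,
        (Complex.exp (Complex.exp (θ * Complex.I)) - 1) ^ k / (Nat.factorial k : ℂ) *
          (Real.sin (n * θ) : ℂ)).im =
      (stirling n k : ℝ) / Nat.factorial n * (π / 2) := by
  set a : ℕ → ℝ := fun m ↦ stirling m k / m.factorial
  have hg (θ : ℝ) : HasSum (fun m ↦ (a m : ℂ) * exp (θ * I) ^ m)
      ((exp (exp (θ * I)) - 1) ^ k / k.factorial) := by
    simpa [a] using hasSum_stirling_div_factorial_mul_pow k (exp (θ * I))
  have ha : Summable fun m ↦ ‖a m‖ := by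
    have h : Summable fun m ↦ (a m : ℂ) := by
      simpa [a] using (hasSum_stirling_div_factorial_mul_pow k 1).summable
    exact (Complex.summable_ofReal.mp h).congr fun m ↦ (Real.norm_of_nonneg (by positivity)).symm
  exact im_integral_mul_sin_of_hasSum ha hg (by omega)
end

section
/- For every natural number n, the Bell number Bₙ equals (1/e) · ∑_{k=0}^{∞} kⁿ/k! (Dobinski's formula). -/
open Real

/-!
Write `Sₙ = ∑ₖ kⁿ/k!`. Since the `k = 0` term vanishes for `n ≥ 1`, shifting the index and
expanding `(k+1)ⁿ` by the binomial theorem gives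
`Sₙ₊₁ = ∑ₖ (k+1)ⁿ/k! = ∑ⱼ C(n,j) Sⱼ`,
which is the Bell recurrence. With `S₀ = e = e·B₀`, induction gives `Sₙ = e·Bₙ`.
-/

open Finset

theorem bell_succ (n : ℕ) : bell (n + 1) = ∑ j ∈ range (n + 1), n.choose j * bell j := by
  rw [bell]
  exact sum_attach (range (n + 1)) fun j => n.choose j * bell j

theorem succ_pow_succ_div_factorial_succ {K : Type*} [Field K] [CharZero K] (n k : ℕ) :
    ((k + 1 : ℕ) : K) ^ (n + 1) / (k + 1).factorial
      = ∑ j ∈ range (n + 1), (n.choose j : K) * ((k : K) ^ j / k.factorial) := by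
  have cancel_succ : ((k + 1 : ℕ) : K) ^ (n + 1) / (k + 1).factorial
      = ((k : K) + 1) ^ n / k.factorial := by
    push_cast [Nat.factorial_succ]
    field_simp
    ring
  rw [cancel_succ, add_pow, sum_div]
  refine sum_congr rfl fun j _ => ?_
  rw [one_pow, mul_one]
  ring

theorem hasSum_pow_div_factorial (n : ℕ) :
    HasSum (fun k : ℕ => (k : ℝ) ^ n / k.factorial) (exp 1 * bell n) := by
  induction n using Nat.strong_induction_on with
  | _ n ih =>
    match n with
    | 0 => simpa [bell, Real.exp_eq_exp_ℝ] using NormedSpace.expSeries_div_hasSum_exp (1 : ℝ)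
    | n + 1 =>
      rw [← hasSum_nat_add_iff' 1]
      simp only [sum_range_one, Nat.cast_zero, zero_pow n.succ_ne_zero, zero_div, sub_zero,
        succ_pow_succ_div_factorial_succ, bell_succ, Nat.cast_sum, Nat.cast_mul, mul_sum]
      refine hasSum_sum fun j hj => ?_
      rw [mul_left_comm]
      exact (ih j (mem_range.mp hj)).mul_left _

theorem dobinski (n : ℕ) :
    (bell n : ℝ) = (1 / Real.exp 1) * ∑' k : ℕ, (k : ℝ) ^ n / Nat.factorial k := by
  rw [(hasSum_pow_div_factorial n).tsum_eq, one_div, inv_mul_cancel_left₀ (exp_ne_zero 1)]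
end
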